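/- Let E be a 4×4 complex matrix with 0 ≤ E ≤ 1 (positive semidefinite with all eigenvalues at most 1). Then |E_{20}|² + |E_{30}|² ≤ 1/4 and |E_{30}|² + |E_{31}|² ≤ 1/4, where E_{ij} denotes the (i,j) matrix entry (0-indexed). -/

import Mathlib

open Matrix
open scoped ComplexOrder

/-!
From `0 ≤ E ≤ 1` we get `E² ≤ E`: with `S = √E`, `E - E² = S (1 - E) S` is positive semidefinite.
For Hermitian `E` the `i`-th diagonal entry of `E²` is `∑ⱼ ‖Eᵢⱼ‖²`, so comparing diagonals gives
`∑ⱼ ‖Eᵢⱼ‖² ≤ re Eᵢᵢ`. Splitting off the diagonal term, the off-diagonal part of row `i` is at most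
`r - r² ≤ 1/4` with `r = re Eᵢᵢ`; columns follow by Hermitian symmetry.
-/

namespace Matrix

variable {𝕜 n : Type*} [RCLike 𝕜] [Fintype n]

open scoped MatrixOrder in
theorem PosSemidef.sub_mul_self [DecidableEq n] {E : Matrix n n 𝕜} (hE : E.PosSemidef)
    (hE1 : (1 - E).PosSemidef) : (E - E * E).PosSemidef := by
  obtain ⟨S, hS, rfl⟩ : ∃ S, 0 ≤ S ∧ S * S = E :=
    ⟨CFC.sqrt E, CFC.sqrt_nonneg E, CFC.sqrt_mul_sqrt_self E hE.nonneg⟩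
  have hconj : S * (1 - S * S) * S = S * S - S * S * (S * S) := by noncomm_ring
  exact hconj ▸ (conjugate_nonneg_of_nonneg hE1.nonneg hS).posSemidef

theorem IsHermitian.re_mul_self_apply_self {E : Matrix n n 𝕜} (hE : E.IsHermitian) (i : n) :
    RCLike.re ((E * E) i i) = ∑ j, ‖E i j‖ ^ 2 := by
  rw [mul_apply, map_sum]
  refine Finset.sum_congr rfl fun j _ => ?_
  rw [← hE.apply j i, RCLike.star_def, RCLike.mul_conj]
  norm_cast

theorem PosSemidef.sum_norm_sq_le_re [DecidableEq n] {E : Matrix n n 𝕜} (hE : E.PosSemidef)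
    (hE1 : (1 - E).PosSemidef) (i : n) : ∑ j, ‖E i j‖ ^ 2 ≤ RCLike.re (E i i) := by
  have hdiag := RCLike.nonneg_iff.mp ((hE.sub_mul_self hE1).diag_nonneg (i := i))
  rw [sub_apply, map_sub, hE.isHermitian.re_mul_self_apply_self] at hdiag
  linarith [hdiag.1]

theorem PosSemidef.sum_norm_sq_le_one_div_four [DecidableEq n] {E : Matrix n n 𝕜}
    (hE : E.PosSemidef) (hE1 : (1 - E).PosSemidef) {i : n} {s : Finset n} (hi : i ∉ s) :
    ∑ j ∈ s, ‖E i j‖ ^ 2 ≤ 1 / 4 := by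
  have hrow := hE.sum_norm_sq_le_re hE1 i
  have hsub : ∑ j ∈ insert i s, ‖E i j‖ ^ 2 ≤ ∑ j, ‖E i j‖ ^ 2 :=
    Finset.sum_le_univ_sum_of_nonneg fun _ => by positivity
  rw [Finset.sum_insert hi] at hsub
  have hre : RCLike.re (E i i) ^ 2 ≤ ‖E i i‖ ^ 2 :=
    sq_le_sq.mpr ((RCLike.abs_re_le_norm _).trans (le_abs_self _))
  nlinarith [sq_nonneg (RCLike.re (E i i) - 1 / 2)]

theorem PosSemidef.norm_sq_add_norm_sq_le_one_div_four_row [DecidableEq n] {E : Matrix n n 𝕜}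
    (hE : E.PosSemidef) (hE1 : (1 - E).PosSemidef) {i j k : n} (hji : j ≠ i) (hki : k ≠ i)
    (hjk : j ≠ k) : ‖E i j‖ ^ 2 + ‖E i k‖ ^ 2 ≤ 1 / 4 := by
  simpa [Finset.sum_pair hjk] using
    hE.sum_norm_sq_le_one_div_four hE1 (s := {j, k}) (by simp [hji.symm, hki.symm])

theorem PosSemidef.norm_sq_add_norm_sq_le_one_div_four_col [DecidableEq n] {E : Matrix n n 𝕜}
    (hE : E.PosSemidef) (hE1 : (1 - E).PosSemidef) {i j k : n} (hji : j ≠ i) (hki : k ≠ i)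
    (hjk : j ≠ k) : ‖E j i‖ ^ 2 + ‖E k i‖ ^ 2 ≤ 1 / 4 := by
  simpa only [← hE.isHermitian.apply i, norm_star] using
    hE.norm_sq_add_norm_sq_le_one_div_four_row hE1 hji hki hjk

end Matrix

theorem stmt15 (E : Matrix (Fin 4) (Fin 4) ℂ)
    (hE : E.PosSemidef) (hE1 : ((1 : Matrix (Fin 4) (Fin 4) ℂ) - E).PosSemidef) :
    ‖E 2 0‖ ^ 2 + ‖E 3 0‖ ^ 2 ≤ 1 / 4 ∧
    ‖E 3 0‖ ^ 2 + ‖E 3 1‖ ^ 2 ≤ 1 / 4 :=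
  ⟨hE.norm_sq_add_norm_sq_le_one_div_four_col hE1 (by decide) (by decide) (by decide),
    hE.norm_sq_add_norm_sq_le_one_div_four_row hE1 (by decide) (by decide) (by decide)⟩
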